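/- (Eigenvalue bounds for a general square matrix via its real and imaginary parts) Let n ≥ 1 and let M be any n×n complex matrix, with real part Re M = (M + M*)/2 and imaginary part Im M = (M − M*)/(2i), both Hermitian. Then: (1) every eigenvalue ζ of M satisfies |ζ − iγ| ≤ ‖Re M‖ for some eigenvalue γ of Im M (i.e. σ(M) lies in the union of the closed discs of radius ‖Re M‖ centered at the points iγ, γ ∈ σ(Im M)); and (2) for every eigenvalue ζ of M there exists γ ∈ σ(Im M) with ‖Im M‖ ≥ |Im ζ| ≥ |γ| − ‖Re M‖. -/

import Mathlib

/-! If `M v = ζ v` with `v ≠ 0` and `H` is Hermitian, then in an orthonormal eigenbasis of `H`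
the vector `ζ v - c H v = (M - c H) v` has coordinates `(ζ - c λⱼ) vⱼ`, so
`minⱼ |ζ - c λⱼ| ‖v‖ ≤ ‖M - c H‖ ‖v‖`: a Bauer–Fike bound for Hermitian perturbations.
Since `M - i Im M = Re M`, taking `H = Im M`, `c = i` gives (1); taking `H = Re M`, `c = 1`
gives `|Im ζ| ≤ ‖Im M‖`, and the lower bound in (2) is the imaginary part of (1). -/

open Matrix

noncomputable section

/-- The ℓ²→ℓ² operator norm of a complex matrix. -/
def opN {n : Type*} [Fintype n] [DecidableEq n] (M : Matrix n n ℂ) : ℝ :=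
  ‖Matrix.toEuclideanCLM (𝕜 := ℂ) M‖

/-- The Hermitian real part `Re M = (M + M*)/2` of a square complex matrix. -/
def reM {n : Type*} [Fintype n] (M : Matrix n n ℂ) : Matrix n n ℂ :=
  (2 : ℂ)⁻¹ • (M + Mᴴ)

/-- The Hermitian imaginary part `Im M = (M − M*)/(2i)` of a square complex matrix. -/
def imM {n : Type*} [Fintype n] (M : Matrix n n ℂ) : Matrix n n ℂ :=
  (2 * Complex.I)⁻¹ • (M - Mᴴ)

section

variable {𝕜 : Type*} [RCLike 𝕜]

theorem EuclideanSpace.mul_norm_le_norm_of_forall {ι : Type*} [Fintype ι] {r : ℝ} (hr : 0 ≤ r)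
    {x y : EuclideanSpace 𝕜 ι} (h : ∀ i, r * ‖x i‖ ≤ ‖y i‖) : r * ‖x‖ ≤ ‖y‖ := by
  rw [← sq_le_sq₀ (by positivity) (norm_nonneg _), mul_pow, EuclideanSpace.norm_sq_eq,
    EuclideanSpace.norm_sq_eq, Finset.mul_sum]
  gcongr with i
  rw [← mul_pow]
  exact pow_le_pow_left₀ (by positivity) (h i) 2

variable {E : Type*} [NormedAddCommGroup E] [InnerProductSpace 𝕜 E] [FiniteDimensional 𝕜 E]

theorem LinearMap.IsSymmetric.exists_mul_norm_le_norm_smul_sub_smul {S : E →ₗ[𝕜] E}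
    (hS : S.IsSymmetric) {n : ℕ} (hn : Module.finrank 𝕜 E = n) (ζ c : 𝕜) {v : E} (hv : v ≠ 0) :
    ∃ i, ‖ζ - c * hS.eigenvalues hn i‖ * ‖v‖ ≤ ‖ζ • v - c • S v‖ := by
  have : Nonempty (Fin n) := by
    have := nontrivial_of_ne v 0 hv
    exact Fin.pos_iff_nonempty.mp (hn ▸ Module.finrank_pos)
  obtain ⟨i, -, hi⟩ := Finset.exists_min_image Finset.univ
    (fun i => ‖ζ - c * hS.eigenvalues hn i‖) Finset.univ_nonempty
  refine ⟨i, ?_⟩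
  let b := hS.eigenvectorBasis hn
  rw [← b.repr.norm_map v, ← b.repr.norm_map]
  refine EuclideanSpace.mul_norm_le_norm_of_forall (norm_nonneg _) fun j => ?_
  have hcoord : b.repr (ζ • v - c • S v) j = (ζ - c * hS.eigenvalues hn j) * b.repr v j := by
    simp only [map_sub, map_smul, PiLp.sub_apply, PiLp.smul_apply, smul_eq_mul, b,
      hS.eigenvectorBasis_apply_self_apply]
    ring
  rw [hcoord, norm_mul]
  exact mul_le_mul_of_nonneg_right (hi j (Finset.mem_univ j)) (norm_nonneg _)

end

namespace Matrix

variable {n : Type*} [Fintype n] [DecidableEq n]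

theorem hasEigenvalue_toEuclideanLin_iff {𝕜 : Type*} [RCLike 𝕜] {A : Matrix n n 𝕜} {μ : 𝕜} :
    Module.End.HasEigenvalue (toEuclideanLin A) μ ↔ μ ∈ spectrum 𝕜 A := by
  rw [Module.End.hasEigenvalue_iff_mem_spectrum, ← spectrum_toLpLin 2]

theorem IsHermitian.exists_mem_spectrum_norm_sub_mul_le_opN {M H : Matrix n n ℂ}
    (hH : H.IsHermitian) (c : ℂ) {ζ : ℂ} (hζ : ζ ∈ spectrum ℂ M) :
    ∃ γ : ℝ, (γ : ℂ) ∈ spectrum ℂ H ∧ ‖ζ - c * γ‖ ≤ opN (M - c • H) := by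
  obtain ⟨x, hx⟩ := (hasEigenvalue_toEuclideanLin_iff.mpr hζ).exists_hasEigenvector
  have hS := isSymmetric_toEuclideanLin_iff.mpr hH
  obtain ⟨i, hi⟩ := hS.exists_mul_norm_le_norm_smul_sub_smul finrank_euclideanSpace ζ c hx.2
  refine ⟨hS.eigenvalues finrank_euclideanSpace i,
    hasEigenvalue_toEuclideanLin_iff.mp (hS.hasEigenvalue_eigenvalues _ i), ?_⟩
  have happly : toEuclideanCLM (𝕜 := ℂ) (M - c • H) x = ζ • x - c • toEuclideanLin H x := by
    rw [map_sub, map_smul, _root_.sub_apply, _root_.smul_apply, ← hx.apply_eq_smul]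
    rfl
  refine le_of_mul_le_mul_right ?_ (norm_pos_iff.mpr hx.2)
  calc ‖ζ - c * _‖ * ‖x‖ ≤ ‖ζ • x - c • toEuclideanLin H x‖ := hi
    _ ≤ opN (M - c • H) * ‖x‖ := happly ▸ (toEuclideanCLM (𝕜 := ℂ) (M - c • H)).le_opNorm x

end Matrix

open ComplexStarModule

section

variable {n : Type*} [Fintype n]

theorem reM_eq_realPart (M : Matrix n n ℂ) : reM M = (ℜ M : Matrix n n ℂ) := by
  rw [realPart_apply_coe, reM, ← Complex.coe_smul]
  norm_num [star_eq_conjTranspose]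

theorem imM_eq_imaginaryPart (M : Matrix n n ℂ) : imM M = (ℑ M : Matrix n n ℂ) := by
  rw [imaginaryPart_apply_coe, imM, ← Complex.coe_smul, smul_smul, mul_inv, Complex.inv_I]
  norm_num [star_eq_conjTranspose, mul_comm]

theorem isHermitian_reM (M : Matrix n n ℂ) : (reM M).IsHermitian :=
  reM_eq_realPart M ▸ (ℜ M).prop

theorem isHermitian_imM (M : Matrix n n ℂ) : (imM M).IsHermitian :=
  imM_eq_imaginaryPart M ▸ (ℑ M).prop

theorem sub_I_smul_imM (M : Matrix n n ℂ) : M - Complex.I • imM M = reM M := by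
  rw [sub_eq_iff_eq_add, reM_eq_realPart, imM_eq_imaginaryPart, realPart_add_I_smul_imaginaryPart]

theorem sub_reM (M : Matrix n n ℂ) : M - reM M = Complex.I • imM M := by
  rw [sub_eq_iff_eq_add', reM_eq_realPart, imM_eq_imaginaryPart, realPart_add_I_smul_imaginaryPart]

theorem opN_smul [DecidableEq n] (c : ℂ) (A : Matrix n n ℂ) : opN (c • A) = ‖c‖ * opN A := by
  rw [opN, opN, map_smul, norm_smul]

end

theorem eigenvalue_bounds_general_general
    {n : ℕ} (M : Matrix (Fin n) (Fin n) ℂ) :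
    (∀ ζ ∈ spectrum ℂ M, ∃ γ : ℝ, (γ : ℂ) ∈ spectrum ℂ (imM M) ∧
      ‖ζ - Complex.I * (γ : ℂ)‖ ≤ opN (reM M)) ∧
    (∀ ζ ∈ spectrum ℂ M, ∃ γ : ℝ, (γ : ℂ) ∈ spectrum ℂ (imM M) ∧
      |ζ.im| ≤ opN (imM M) ∧ |γ| - opN (reM M) ≤ |ζ.im|) := by
  have disc_bound : ∀ ζ ∈ spectrum ℂ M, ∃ γ : ℝ, (γ : ℂ) ∈ spectrum ℂ (imM M) ∧
      ‖ζ - Complex.I * (γ : ℂ)‖ ≤ opN (reM M) := fun ζ hζ ↦ by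
    simpa only [sub_I_smul_imM] using (isHermitian_imM M).exists_mem_spectrum_norm_sub_mul_le_opN
      Complex.I hζ
  refine ⟨disc_bound, fun ζ hζ ↦ ?_⟩
  obtain ⟨γ, hγ, hζγ⟩ := disc_bound ζ hζ
  obtain ⟨ρ, -, hζρ⟩ := (isHermitian_reM M).exists_mem_spectrum_norm_sub_mul_le_opN 1 hζ
  rw [one_smul, sub_reM, opN_smul, Complex.norm_I, one_mul, one_mul] at hζρ
  have him_le : |ζ.im| ≤ opN (imM M) := by
    simpa using (Complex.abs_im_le_norm (ζ - ρ)).trans hζρ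
  have him_sub_le : |ζ.im - γ| ≤ opN (reM M) := by
    simpa using (Complex.abs_im_le_norm (ζ - Complex.I * γ)).trans hζγ
  refine ⟨γ, hγ, him_le, ?_⟩
  linarith [abs_sub_abs_le_abs_sub γ ζ.im, abs_sub_comm γ ζ.im]

/-- **Eigenvalue bounds for a general square matrix via its real and imaginary parts.**
(1) every eigenvalue `ζ` of `M` satisfies `|ζ − iγ| ≤ ‖Re M‖` for some eigenvalue `γ` of
`Im M`; (2) for every eigenvalue `ζ` of `M` there is `γ ∈ σ(Im M)` with
`‖Im M‖ ≥ |Im ζ| ≥ |γ| − ‖Re M‖`. -/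
theorem eigenvalue_bounds_general
    {n : ℕ} (hn : 1 ≤ n) (M : Matrix (Fin n) (Fin n) ℂ) :
    (∀ ζ ∈ spectrum ℂ M, ∃ γ : ℝ, (γ : ℂ) ∈ spectrum ℂ (imM M) ∧
      ‖ζ - Complex.I * (γ : ℂ)‖ ≤ opN (reM M)) ∧
    (∀ ζ ∈ spectrum ℂ M, ∃ γ : ℝ, (γ : ℂ) ∈ spectrum ℂ (imM M) ∧
      |ζ.im| ≤ opN (imM M) ∧ |γ| - opN (reM M) ≤ |ζ.im|) :=
  eigenvalue_bounds_general_general M
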